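/- arXiv:1206.1381 — 3 statements merged into one kernel-verified Lean document; each statement's English description precedes it below -/
import Mathlib

section
/- One has q̃_m(0) > 0 for every m ≥ 2; q̃₂(5) < 0 and q̃_m(5) > 0 for every m ≥ 3; and q̃₂(6) > 0 and q̃_m(6) < 0 for every m ≥ 3. -/
open Function

noncomputable section

/-- The polynomial map `f(x) = x(5-x)`. -/
def f (x : ℝ) : ℝ := x * (5 - x)

/-- `l(x) = x - 6`. -/
def lf (x : ℝ) : ℝ := x - 6

/-- `s(x) = (2-x)(4-x)(5-x) - (14-3x)`. -/
def sf (x : ℝ) : ℝ := (2 - x) * (4 - x) * (5 - x) - (14 - 3 * x)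

/-- `r(x) = -2(2-x)(5-x)`. -/
def rf (x : ℝ) : ℝ := -2 * (2 - x) * (5 - x)

/-- The decreasing inverse branch of `f`. -/
def phim (x : ℝ) : ℝ := (5 - Real.sqrt (25 - 4 * x)) / 2

/-- The increasing inverse branch of `f`. -/
def phip (x : ℝ) : ℝ := (5 + Real.sqrt (25 - 4 * x)) / 2

/-- `q m` is the function `q_m` from the paper, meaningful for `m ≥ 2`
(the values at `m = 0, 1` are junk values `1`, never used in the statements). -/
def q : ℕ → ℝ → ℝ
  | 0, _ => 1
  | 1, _ => 1
  | 2, x => sf x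
  | 3, x => sf (f x) * sf x - rf (f x) * lf x
  | m + 4, x =>
      sf (f^[m + 2] x) * q (m + 3) x - rf (f^[m + 2] x) * lf (f^[m + 1] x) * q (m + 2) x

/-- `s̃(x) = (4-x)(5-x) - 1`. -/
def st (x : ℝ) : ℝ := (4 - x) * (5 - x) - 1

/-- `r̃(x) = -2(5-x)`. -/
def rt (x : ℝ) : ℝ := -2 * (5 - x)

/-- `qt m` is the function `q̃_m` from the paper, meaningful for `m ≥ 2`. -/
def qt (m : ℕ) (x : ℝ) : ℝ :=
  if m = 2 then st x
  else if m = 3 then st (f x) * sf x - rt (f x) * lf x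
  else st (f^[m - 2] x) * q (m - 1) x - rt (f^[m - 2] x) * lf (f^[m - 3] x) * q (m - 2) x

lemma f_iter_zero (k : ℕ) : f^[k] (0:ℝ) = 0 := by
  induction k with
  | zero => rfl
  | succ n ih => rw [Function.iterate_succ_apply', ih]; norm_num [f]

lemma f_iter_five (k : ℕ) : f^[k+1] (5:ℝ) = 0 := by
  rw [Function.iterate_succ_apply]
  have : f 5 = 0 := by norm_num [f]
  rw [this, f_iter_zero]

lemma f_step_six : ∀ y : ℝ, y ≤ -6 → f y ≤ -6 := by
  intro y hy; unfold f; nlinarith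

lemma f_iter_six (k : ℕ) : f^[k+1] (6:ℝ) ≤ -6 := by
  induction k with
  | zero => norm_num [f]
  | succ n ih =>
    rw [Function.iterate_succ_apply']
    exact f_step_six _ ih

lemma q_rec (m : ℕ) (x : ℝ) :
    q (m+4) x = sf (f^[m + 2] x) * q (m + 3) x
      - rf (f^[m + 2] x) * lf (f^[m + 1] x) * q (m + 2) x := rfl

lemma qt_rec (m : ℕ) (x : ℝ) :
    qt (m+4) x = st (f^[m + 2] x) * q (m + 3) x
      - rt (f^[m + 2] x) * lf (f^[m + 1] x) * q (m + 2) x := by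
  show (if m + 4 = 2 then _ else if m + 4 = 3 then _ else _) = _
  norm_num [Nat.add_sub_cancel]
  congr 2

lemma q_zero (m : ℕ) : 0 < q (m+2) 0 ∧ 20 * q (m+2) 0 ≤ q (m+3) 0 := by
  induction m with
  | zero => constructor <;> norm_num [q, sf, rf, lf, f]
  | succ n ih =>
    obtain ⟨h1, h2⟩ := ih
    have hq : q (n+4) 0 = 26 * q (n+3) 0 - 120 * q (n+2) 0 := by
      rw [q_rec, f_iter_zero, f_iter_zero]
      norm_num [sf, rf, lf]
    constructor
    · linarith
    · rw [show n+1+3 = n+4 from rfl, hq]; linarith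

lemma q_five (m : ℕ) : 0 < q (m+2) 5 ∧ 6 * q (m+2) 5 ≤ q (m+3) 5 := by
  induction m with
  | zero => constructor <;> norm_num [q, sf, rf, lf, f]
  | succ n ih =>
    obtain ⟨h1, h2⟩ := ih
    have hq : q (n+4) 5 = 26 * q (n+3) 5 - 120 * q (n+2) 5 := by
      rw [q_rec, f_iter_five, show n+1+1 = n+1+1 from rfl, f_iter_five]
      norm_num [sf, rf, lf]
    constructor
    · linarith
    · rw [show n+1+3 = n+4 from rfl, hq]; linarith

lemma q_six (m : ℕ) : q (m+2) 6 < 0 ∧ q (m+3) 6 ≤ (6 - f^[m+1] 6) * q (m+2) 6 := by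
  induction m with
  | zero =>
    have h1 : f^[1] (6:ℝ) = -6 := by norm_num [f]
    rw [h1]
    constructor <;> norm_num [q, sf, rf, lf, f]
  | succ n ih =>
    obtain ⟨h1, h2⟩ := ih
    have ha : f^[n+1] (6:ℝ) ≤ -6 := f_iter_six n
    have hy : f^[n+2] (6:ℝ) ≤ -6 := f_iter_six (n+1)
    set a := f^[n+1] (6:ℝ) with hadef
    set y := f^[n+2] (6:ℝ) with hydef
    have h3 : q (n+3) 6 < 0 := by nlinarith
    refine ⟨h3, ?_⟩
    have hq := q_rec n 6
    rw [← hydef, ← hadef] at hq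
    have hpos : (0:ℝ) < 2*(2-y)*(5-y) := by nlinarith
    have e1 : rf y * lf a * q (n+2) 6 = 2*(2-y)*(5-y) * ((6-a) * q (n+2) 6) := by
      unfold rf lf; ring
    have k1 : 2*(2-y)*(5-y) * q (n+3) 6 ≤ rf y * lf a * q (n+2) 6 := by
      rw [e1]; exact mul_le_mul_of_nonneg_left h2 hpos.le
    have hc : 2*(2-y)*(5-y) ≤ sf y - (6-y) := by unfold sf; nlinarith [sq_nonneg (2-y)]
    have k2 : (sf y - (6-y)) * q (n+3) 6 ≤ 2*(2-y)*(5-y) * q (n+3) 6 :=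
      mul_le_mul_of_nonpos_right hc h3.le
    rw [show n+1+3 = n+4 from rfl, hq]
    show sf y * q (n+3) 6 - rf y * lf a * q (n+2) 6 ≤ (6-y) * q (n+3) 6
    linarith

theorem statement_8 :
    (∀ m : ℕ, 2 ≤ m → 0 < qt m 0) ∧
    (qt 2 5 < 0 ∧ ∀ m : ℕ, 3 ≤ m → 0 < qt m 5) ∧
    (0 < qt 2 6 ∧ ∀ m : ℕ, 3 ≤ m → qt m 6 < 0) := by
  refine ⟨?_, ⟨?_, ?_⟩, ⟨?_, ?_⟩⟩
  · intro m hm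
    match m, hm with
    | 2, _ => norm_num [qt, st]
    | 3, _ => norm_num [qt, st, sf, rt, lf, f]
    | (k+4), _ =>
      rw [qt_rec, f_iter_zero, f_iter_zero]
      obtain ⟨h1, h2⟩ := q_zero k
      have h3 : 0 < q (k+3) 0 := by linarith
      have e : st (0:ℝ) = 19 := by norm_num [st]
      have e2 : rt (0:ℝ) * lf (0:ℝ) = 60 := by norm_num [rt, lf]
      rw [e]
      calc (0:ℝ) < 19 * q (k+3) 0 - rt 0 * lf 0 * q (k+2) 0 := by rw [e2]; linarith
        _ = _ := rfl
  · norm_num [qt, st]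
  · intro m hm
    match m, hm with
    | 3, _ => norm_num [qt, st, sf, rt, lf, f]
    | (k+4), _ =>
      rw [qt_rec, f_iter_five, f_iter_five]
      obtain ⟨h1, h2⟩ := q_five k
      have h3 : 0 < q (k+3) 5 := by linarith
      have e : st (0:ℝ) = 19 := by norm_num [st]
      have e2 : rt (0:ℝ) * lf (0:ℝ) = 60 := by norm_num [rt, lf]
      rw [e]
      calc (0:ℝ) < 19 * q (k+3) 5 - rt 0 * lf 0 * q (k+2) 5 := by rw [e2]; linarith
        _ = _ := rfl
  · norm_num [qt, st]
  · intro m hm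
    match m, hm with
    | 3, _ => norm_num [qt, st, sf, rt, lf, f]
    | (k+4), _ =>
      rw [qt_rec]
      obtain ⟨h1, h2⟩ := q_six k
      have ha : f^[k+1] (6:ℝ) ≤ -6 := f_iter_six k
      have hy : f^[k+2] (6:ℝ) ≤ -6 := f_iter_six (k+1)
      set a := f^[k+1] (6:ℝ)
      set y := f^[k+2] (6:ℝ)
      have hst : (0:ℝ) < st y := by unfold st; nlinarith
      have e2 : rt y * lf a * q (k+2) 6 = 2*(5-y) * ((6-a) * q (k+2) 6) := by
        unfold rt lf; ring
      have k1 : 2*(5-y) * q (k+3) 6 ≤ rt y * lf a * q (k+2) 6 := by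
        rw [e2]
        have : (0:ℝ) < 2*(5-y) := by linarith
        exact mul_le_mul_of_nonneg_left h2 this.le
      have k2 : st y * q (k+3) 6 ≤ st y * ((6-a) * q (k+2) 6) :=
        mul_le_mul_of_nonneg_left h2 hst.le
      have hq3 : q (k+3) 6 < 0 := by nlinarith
      have hcoef : 2*(5-y) < st y := by unfold st; nlinarith
      have : st y * q (k+3) 6 < 2*(5-y) * q (k+3) 6 := by nlinarith
      linarith
end
end

section
/- Let m ≥ 2, let l ≥ 2, and let α ∈ ℝ with α ≤ 25/4 and q_m(α) = 0. Then q_{m+l}(φ₋^{(l)}(α)) = q_l(φ₋^{(l)}(α)) · q_{m+1}(φ₋(α)). -/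
open Function

noncomputable section

lemma qrec (m : ℕ) (x : ℝ) :
    q (m + 3) x = sf (f^[m + 1] x) * q (m + 2) x - rf (f^[m + 1] x) * lf (f^[m] x) * q (m + 1) x := by
  match m with
  | 0 => simp [q]
  | m + 1 => rfl

lemma f_phim (x : ℝ) (hx : x ≤ 25 / 4) : f (phim x) = x := by
  have h : Real.sqrt (25 - 4 * x) ^ 2 = 25 - 4 * x := Real.sq_sqrt (by linarith)
  unfold f phim
  nlinarith [h]

lemma phim_le (x : ℝ) : phim x ≤ 25 / 4 := by
  have := Real.sqrt_nonneg (25 - 4 * x)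
  unfold phim; linarith

lemma f_iter_phim (n : ℕ) : ∀ x : ℝ, x ≤ 25 / 4 → f^[n] (phim^[n] x) = x := by
  induction n with
  | zero => simp
  | succ n ih =>
    intro x hx
    rw [Function.iterate_succ_apply' f, Function.iterate_succ_apply phim,
      ih (phim x) (phim_le x), f_phim x hx]

lemma iter_eq1 (n : ℕ) (α : ℝ) : f^[n] (phim^[n + 1] α) = phim α := by
  rw [Function.iterate_succ_apply phim, f_iter_phim n (phim α) (phim_le α)]

lemma iter_eq (j n : ℕ) (α : ℝ) (hα : α ≤ 25 / 4) :
    f^[n + 1 + j] (phim^[n + 1] α) = f^[j] α := by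
  rw [Nat.add_comm, Function.iterate_add_apply, f_iter_phim (n + 1) α hα]

lemma star (m : ℕ) : ∀ (n : ℕ) (α : ℝ), α ≤ 25 / 4 →
    q (m + n + 3) (phim^[n + 1] α) =
      q (m + 2) α * q (n + 2) (phim^[n + 1] α)
        - rf α * lf (phim α) * q (m + 1) (f α) * q (n + 1) (phim^[n + 1] α) := by
  induction m using Nat.twoStepInduction with
  | zero =>
    intro n α hα
    have h0 : f^[n + 1] (phim^[n + 1] α) = α := f_iter_phim (n + 1) α hα
    rw [Nat.zero_add, qrec n (phim^[n + 1] α), h0, iter_eq1 n α]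
    simp [q]
  | one =>
    intro n α hα
    have h0 : f^[n + 1] (phim^[n + 1] α) = α := f_iter_phim (n + 1) α hα
    have h2 : f^[n + 2] (phim^[n + 1] α) = f α := by
      have := iter_eq 1 n α hα
      simpa using this
    have e : 1 + n + 3 = (n + 1) + 3 := by omega
    rw [e, qrec (n + 1) (phim^[n + 1] α), qrec n (phim^[n + 1] α), h0, h2, iter_eq1 n α]
    simp [q]; ring
  | more m ih ih1 =>
    intro n α hα
    have hm2 : f^[m + n + 3] (phim^[n + 1] α) = f^[m + 2] α := by
      have := iter_eq (m + 2) n α hα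
      rwa [show n + 1 + (m + 2) = m + n + 3 by omega] at this
    have hm1 : f^[m + n + 2] (phim^[n + 1] α) = f^[m + 1] α := by
      have := iter_eq (m + 1) n α hα
      rwa [show n + 1 + (m + 1) = m + n + 2 by omega] at this
    have e : m + 2 + n + 3 = (m + n + 2) + 3 := by omega
    rw [e, qrec (m + n + 2) (phim^[n + 1] α), hm2, hm1,
      show m + n + 2 + 2 = (m + 1) + n + 3 by omega,
      show m + n + 2 + 1 = m + n + 3 by omega,
      ih1 n α hα, ih n α hα, qrec (m + 1) α, qrec m (f α),
      ← Function.iterate_succ_apply f (m + 1) α, ← Function.iterate_succ_apply f m α]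
    ring

theorem statement_13 (m n : ℕ) (hm : 2 ≤ m) (hn : 2 ≤ n) (α : ℝ)
    (hα : α ≤ 25 / 4) (hq : q m α = 0) :
    q (m + n) (phim^[n] α) = q n (phim^[n] α) * q (m + 1) (phim α) := by
  obtain ⟨m', rfl⟩ : ∃ m', m = m' + 2 := ⟨m - 2, by omega⟩
  obtain ⟨n', rfl⟩ : ∃ n', n = n' + 2 := ⟨n - 2, by omega⟩
  have h1 := star m' (n' + 1) α hα
  have h2 := star m' 0 α hα
  rw [show m' + (n' + 1) + 3 = m' + 2 + (n' + 2) by omega, show n' + 1 + 1 = n' + 2 by omega,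
    hq] at h1
  rw [hq] at h2
  simp only [Nat.zero_add, Function.iterate_one] at h2
  rw [h1, show m' + 0 + 3 = m' + 2 + 1 by omega] at *
  rw [h2]
  simp [q]
  ring
end
end

section
/- Let m ≥ 2 and suppose P, P' ∈ ℝ[X] satisfy P·D_m = Q_m and P'·D_{m+1} = Q_{m+1}. Let λ* be the largest real root of P (which satisfies 5 < λ* < 6). Then every real root μ of P' with φ₋(λ*) < μ < φ₊(λ*) satisfies μ > 2. -/
open Function

noncomputable section

open Polynomial

/-- The polynomial `F = 5X - X²`. -/
def F : ℝ[X] := C 5 * X - X ^ 2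

/-- `Fiter i` is the `i`-fold composition `F^{(i)}`, with `Fiter 0 = X`. -/
def Fiter : ℕ → ℝ[X]
  | 0 => X
  | i + 1 => F.comp (Fiter i)

/-- Polynomial version of `l`. -/
def Lp : ℝ[X] := X - C 6

/-- Polynomial version of `s`. -/
def Sp : ℝ[X] := (C 2 - X) * (C 4 - X) * (C 5 - X) - (C 14 - C 3 * X)

/-- Polynomial version of `r`. -/
def Rp : ℝ[X] := -C 2 * (C 2 - X) * (C 5 - X)

/-- `Qp m` is the polynomial `Q_m`, satisfying `(Qp m).eval x = q_m x`,
defined by the same recursion as `q_m`; meaningful for `m ≥ 2`. -/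
def Qp : ℕ → ℝ[X]
  | 0 => 1
  | 1 => 1
  | 2 => Sp
  | 3 => Sp.comp (Fiter 1) * Sp - Rp.comp (Fiter 1) * Lp
  | m + 4 =>
      Sp.comp (Fiter (m + 2)) * Qp (m + 3) -
        Rp.comp (Fiter (m + 2)) * Lp.comp (Fiter (m + 1)) * Qp (m + 2)

/-- `Dp m = ∏_{i=0}^{m-3} (F^{(i)} - 2)`, with `Dp 2 = 1`. -/
def Dp (m : ℕ) : ℝ[X] := ∏ i ∈ Finset.range (m - 2), (Fiter i - C 2)

/-- `r_m = 2^m + 2^{m-2} - 2`. -/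
def rm (m : ℕ) : ℕ := 2 ^ m + 2 ^ (m - 2) - 2

/-!
Expanding the tridiagonal determinant along its last row gives
`q_{k+3}(x) = s(x) q_{k+2}(f x) - r(f x) l(x) q_{k+1}(f (f x))`. Since `f` maps `(-∞, 0]` into
itself and `4 r(u) l(v) ≤ s(u) s(v)` there, this recursion is diagonally dominant on `x ≤ 0`:
`q ≥ 1` and `s(w) q_{k+1}(f w) ≤ 2 q_{k+2}(w)`. Feeding this into one or two expansions gives
`q_m < 0` on `[6, ∞)`, `q_m(26/5) > 0`, and `q_{m+1}(x) ≤ x - 2` whenever `x ≤ 2` and `f x > 26/5`.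

As `D_m` has no zero on `(5, ∞)`, the intermediate value theorem puts `λ*` in `(26/5, 6)`.
A root `μ ≤ 2` of `P'` with `φ₋(λ*) < μ < φ₊(λ*)` has `f μ > λ* > 26/5`, so `q_{m+1}(μ) = 0` forces
`μ = 2`; but `2` is also a root of `D_{m+1}`, hence a double root of `Q_{m+1}`, which is
incompatible with `Q_{m+1}(x) ≤ x - 2` just left of `2`.
-/

lemma q_expand_top (k : ℕ) (y : ℝ) :
    q (k + 3) y =
      sf (f^[k + 1] y) * q (k + 2) y - rf (f^[k + 1] y) * lf (f^[k] y) * q (k + 1) y := by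
  cases k <;> simp [q]

lemma q_expand_bottom : ∀ (k : ℕ) (y : ℝ),
    q (k + 3) y = sf y * q (k + 2) (f y) - rf (f y) * lf y * q (k + 1) (f (f y))
  | 0, y => by simp [q]; ring
  | 1, y => by simp [q]; ring
  | k + 2, y => by
    have h := q_expand_top (k + 2) y
    rw [q_expand_bottom (k + 1) y, q_expand_bottom k y] at h
    rw [h, q_expand_top (k + 1) (f y), q_expand_top k (f (f y))]
    simp only [← iterate_succ_apply]
    ring

lemma eval_Fiter (i : ℕ) (x : ℝ) : (Fiter i).eval x = f^[i] x := by
  induction i with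
  | zero => simp [Fiter]
  | succ i ih => simp [Fiter, F, f, ih, iterate_succ_apply']; ring

lemma eval_Qp : ∀ (k : ℕ) (x : ℝ), (Qp k).eval x = q k x
  | 0, x | 1, x => by simp [Qp, q]
  | 2, x => by simp [Qp, q, Sp, sf]
  | 3, x => by simp [Qp, q, Sp, sf, Rp, rf, Lp, lf, eval_Fiter]
  | k + 4, x => by
    simp only [Qp, q, eval_sub, eval_mul, eval_comp, eval_Fiter, eval_Qp (k + 3), eval_Qp (k + 2)]
    simp [Sp, sf, Rp, rf, Lp, lf]

lemma f_neg_of_neg {x : ℝ} (hx : x < 0) : f x < 0 := by unfold f; nlinarith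

lemma iterate_f_neg_of_five_lt {x : ℝ} (hx : 5 < x) (i : ℕ) : f^[i + 1] x < 0 := by
  induction i with
  | zero => simp only [zero_add, iterate_one, f]; nlinarith
  | succ i ih => rw [iterate_succ_apply']; exact f_neg_of_neg ih

lemma eval_Dp_ne_zero_of_five_lt (m : ℕ) {x : ℝ} (hx : 5 < x) : (Dp m).eval x ≠ 0 := by
  simp only [Dp, eval_prod, eval_sub, eval_C, eval_Fiter]
  refine Finset.prod_ne_zero_iff.mpr fun i _ => sub_ne_zero.mpr ?_
  rcases i with _ | i
  · simp only [iterate_zero, id]; linarith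
  · linarith [iterate_f_neg_of_five_lt hx i]

lemma X_sub_C_two_dvd_Dp {m : ℕ} (hm : 3 ≤ m) : X - C 2 ∣ Dp m := by
  simpa [Dp, Fiter] using
    Finset.dvd_prod_of_mem (fun i => Fiter i - C 2) (Finset.mem_range.mpr (by omega : 0 < m - 2))

lemma f_nonpos_of_nonpos {x : ℝ} (hx : x ≤ 0) : f x ≤ 0 := by unfold f; nlinarith

lemma twentysix_le_sf_of_nonpos {w : ℝ} (hw : w ≤ 0) : 26 ≤ sf w := by
  unfold sf; nlinarith [mul_nonneg (sq_nonneg w) (neg_nonneg.2 hw)]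

lemma le_sf_quadratic_of_nonpos {u : ℝ} (hu : u ≤ 0) : 13 / 5 * ((2 - u) * (5 - u)) ≤ sf u := by
  unfold sf; nlinarith [mul_nonneg (sq_nonneg u) (neg_nonneg.2 hu)]

lemma le_sf_linear_of_nonpos {v : ℝ} (hv : v ≤ 0) : 13 / 3 * (6 - v) ≤ sf v := by
  unfold sf; nlinarith [mul_nonneg (sq_nonneg v) (neg_nonneg.2 hv)]

lemma le_sf_quadratic_of_le_neg_one {w : ℝ} (hw : w ≤ -1) : 4 * ((2 - w) * (5 - w)) ≤ sf w := by
  unfold sf; nlinarith [pow_nonneg (show (0 : ℝ) ≤ -1 - w by linarith) 3]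

lemma four_mul_rf_mul_lf_le_sf_mul_sf {u v : ℝ} (hu : u ≤ 0) (hv : v ≤ 0) :
    4 * (rf u * lf v) ≤ sf u * sf v := by
  have h := mul_le_mul (le_sf_quadratic_of_nonpos hu) (le_sf_linear_of_nonpos hv)
    (by nlinarith) (by linarith [twentysix_le_sf_of_nonpos hu])
  unfold rf lf
  nlinarith [mul_nonneg (mul_nonneg (by linarith : (0 : ℝ) ≤ 2 - u) (by linarith : (0 : ℝ) ≤ 5 - u))
    (by linarith : (0 : ℝ) ≤ 6 - v)]

lemma q_bounds_of_nonpos : ∀ (k : ℕ) {w : ℝ}, w ≤ 0 →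
    1 ≤ q (k + 1) w ∧ sf w * q (k + 1) (f w) ≤ 2 * q (k + 2) w
  | 0, w, hw => by
    simp only [q]
    constructor <;> linarith [twentysix_le_sf_of_nonpos hw]
  | k + 1, w, hw => by
    have hfw := f_nonpos_of_nonpos hw
    have hsw := twentysix_le_sf_of_nonpos hw
    obtain ⟨-, hw_step⟩ := q_bounds_of_nonpos k hw
    obtain ⟨hfw_one, hfw_step⟩ := q_bounds_of_nonpos k hfw
    obtain ⟨hffw_one, -⟩ := q_bounds_of_nonpos k (f_nonpos_of_nonpos hfw)
    refine ⟨by nlinarith, ?_⟩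
    rw [q_expand_bottom]
    have h := four_mul_rf_mul_lf_le_sf_mul_sf hfw hw
    nlinarith [mul_le_mul_of_nonneg_right h (by linarith : (0 : ℝ) ≤ q (k + 1) (f (f w))),
      mul_le_mul_of_nonneg_left hfw_step (by linarith : (0 : ℝ) ≤ sf w)]

lemma one_le_q_of_nonpos (k : ℕ) {w : ℝ} (hw : w ≤ 0) : 1 ≤ q (k + 1) w :=
  (q_bounds_of_nonpos k hw).1

lemma sf_mul_q_le_of_nonpos (k : ℕ) {w : ℝ} (hw : w ≤ 0) :
    sf w * q (k + 1) (f w) ≤ 2 * q (k + 2) w :=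
  (q_bounds_of_nonpos k hw).2

lemma q_neg_of_six_le (k : ℕ) {x : ℝ} (hx : 6 ≤ x) : q (k + 2) x < 0 := by
  rcases k with _ | k
  · simp only [q, sf]; nlinarith [pow_nonneg (sub_nonneg.2 hx) 3]
  have hfx : f x ≤ 0 := by unfold f; nlinarith
  have hsx : sf x ≤ -4 - 20 / 13 * (x - 6) := by
    unfold sf
    nlinarith [mul_nonneg (sub_nonneg.2 hx) (sub_nonneg.2 hx), pow_nonneg (sub_nonneg.2 hx) 3]
  have hq_fx := one_le_q_of_nonpos (k + 1) hfx
  have hq_ffx := one_le_q_of_nonpos k (f_nonpos_of_nonpos hfx)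
  have hstep := mul_le_mul_of_nonneg_left (sf_mul_q_le_of_nonpos k hfx) (sub_nonneg.2 hx)
  have hquad := mul_le_mul_of_nonneg_right (le_sf_quadratic_of_nonpos hfx)
    (mul_nonneg (sub_nonneg.2 hx) (by linarith : (0 : ℝ) ≤ q (k + 1) (f (f x))))
  rw [q_expand_bottom]
  unfold rf lf
  nlinarith [mul_le_mul_of_nonneg_right hsx (by linarith : (0 : ℝ) ≤ q (k + 2) (f x))]

lemma q_pos_at_twentysix_fifths (k : ℕ) : 0 < q (k + 2) (26 / 5) := by
  rcases k with _ | k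
  · norm_num [q, sf]
  have hf : f (26 / 5) = -26 / 25 := by norm_num [f]
  have hq_one := one_le_q_of_nonpos (k + 1) (by norm_num : (-26 / 25 : ℝ) ≤ 0)
  have hstep := sf_mul_q_le_of_nonpos k (by norm_num : (-26 / 25 : ℝ) ≤ 0)
  rw [q_expand_bottom, hf]
  norm_num [sf, rf, lf] at hstep ⊢
  linarith

-- The right-hand side is what remains of `q_{k+3}(x)` after the two expansions in `q_le_sub_two`.
lemma two_sub_le_of_mem_Icc {x : ℝ} (h1 : 7 / 5 ≤ x) (h2 : x ≤ 2) :
    2 - x ≤ 2 * ((f x - 2) * (f x - 5)) * (6 - x) - sf (f x) * sf x + (6 - f x) * sf x := by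
  set t := x - 7 / 5 with ht
  have ht0 : 0 ≤ t := by linarith
  have ht1 : t ≤ 3 / 5 := by linarith
  have p3 : t ^ 3 ≤ 9 / 25 * t := by
    nlinarith [mul_le_mul ht1 ht1 ht0 (by norm_num : (0 : ℝ) ≤ 3 / 5)]
  have p6 : t ^ 6 ≤ 3 / 5 * t ^ 5 := by nlinarith [mul_le_mul_of_nonneg_left ht1 (pow_nonneg ht0 5)]
  have p8 : t ^ 8 ≤ 3 / 5 * t ^ 7 := by nlinarith [mul_le_mul_of_nonneg_left ht1 (pow_nonneg ht0 7)]
  have hK : 0 ≤ 429059 / 390625 + 9211916 / 78125 * t + 1277093 / 15625 * t ^ 2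
      - 775242 / 3125 * t ^ 3 + 6356 / 125 * t ^ 4 + 11372 / 125 * t ^ 5
      - 1442 / 25 * t ^ 6 + 64 / 5 * t ^ 7 - t ^ 8 := by
    nlinarith [pow_nonneg ht0 2, pow_nonneg ht0 4, pow_nonneg ht0 5, pow_nonneg ht0 7]
  have hfac : 2 * ((f x - 2) * (f x - 5)) * (6 - x) - sf (f x) * sf x + (6 - f x) * sf x - (2 - x)
      = (2 - x) * (429059 / 390625 + 9211916 / 78125 * t + 1277093 / 15625 * t ^ 2
      - 775242 / 3125 * t ^ 3 + 6356 / 125 * t ^ 4 + 11372 / 125 * t ^ 5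
      - 1442 / 25 * t ^ 6 + 64 / 5 * t ^ 7 - t ^ 8) := by
    rw [ht]; unfold sf f; ring
  nlinarith [mul_nonneg (sub_nonneg.2 h2) hK]

lemma le_sf_mul_q_of_le_six (k : ℕ) {z : ℝ} (hz : z ≤ 6) (hfz : f z ≤ 0) :
    (sf (f z) * sf z - 4 * ((2 - f z) * (5 - f z)) * (6 - z)) * q (k + 1) (f z)
      ≤ sf (f z) * q (k + 2) z := by
  have hcoef : 0 ≤ (2 - f z) * (5 - f z) * (6 - z) :=
    mul_nonneg (mul_nonneg (by linarith) (by linarith)) (by linarith)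
  rcases k with _ | k
  · simp only [q]; nlinarith
  have hstep := mul_le_mul_of_nonneg_left (sf_mul_q_le_of_nonpos k hfz) hcoef
  rw [q_expand_bottom]
  unfold rf lf
  nlinarith

lemma q_le_sub_two (k : ℕ) {x : ℝ} (hx : x ≤ 2) (hfx : 26 / 5 < f x) : q (k + 3) x ≤ x - 2 := by
  set z := f x with hz
  set w := f z with hw
  have hx1 : 7 / 5 ≤ x := by rw [hz, f] at hfx; nlinarith
  have hz6 : z ≤ 6 := by rw [hz, f]; nlinarith
  have hw1 : w ≤ -1 := by rw [hw, f]; nlinarith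
  have hsx : sf x < 0 := by
    unfold sf
    nlinarith [mul_nonneg (by linarith : (0 : ℝ) ≤ x - 7 / 5) (by linarith : (0 : ℝ) ≤ 2 - x)]
  have hsw : 0 < sf w := by linarith [twentysix_le_sf_of_nonpos (by linarith : w ≤ 0)]
  have hq_w := one_le_q_of_nonpos k (by linarith : w ≤ 0)
  have hq_w0 : 0 ≤ q (k + 1) w := by linarith
  have hA := mul_le_mul_of_nonpos_left (le_sf_mul_q_of_le_six k hz6 (by linarith)) hsx.le
  have hw4 := mul_le_mul_of_nonneg_right (le_sf_quadratic_of_le_neg_one hw1)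
    (mul_nonneg (sub_nonneg.2 hz6) (mul_nonneg (neg_nonneg.2 hsx.le) hq_w0))
  have hK := mul_le_mul_of_nonneg_right (two_sub_le_of_mem_Icc hx1 hx)
    (mul_nonneg hsw.le hq_w0)
  have hq_w' := mul_le_mul_of_nonneg_left hq_w (mul_nonneg hsw.le (by linarith : (0 : ℝ) ≤ 2 - x))
  rw [← mul_le_mul_iff_right₀ hsw, q_expand_bottom]
  unfold rf lf
  nlinarith

lemma lt_f_of_phim_lt_of_lt_phip {a μ : ℝ} (ha : a ≤ 25 / 4) (hlo : phim a < μ) (hhi : μ < phip a) :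
    a < f μ := by
  have hsq := Real.sq_sqrt (by linarith : (0 : ℝ) ≤ 25 - 4 * a)
  unfold phim at hlo
  unfold phip at hhi
  unfold f
  nlinarith [mul_pos (sub_pos.2 hlo) (sub_pos.2 hhi)]

open Filter Topology in
lemma Polynomial.not_sq_dvd_of_eval_le_sub {p : ℝ[X]} {a b : ℝ} (hb : b < a)
    (h : ∀ x ∈ Set.Ioo b a, p.eval x ≤ x - a) : ¬ (X - C a) ^ 2 ∣ p := by
  rintro ⟨r, rfl⟩
  have hlim : Tendsto (fun x => ((X - C a) * r).eval x) (𝓝[<] a) (𝓝 0) := by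
    have h0 : ((X - C a) * r).eval a = 0 := by simp
    exact h0 ▸ tendsto_nhdsWithin_of_tendsto_nhds (((X - C a) * r).continuous.tendsto a)
  have hge : ∀ᶠ x in 𝓝[<] a, 1 ≤ ((X - C a) * r).eval x := by
    filter_upwards [Ioo_mem_nhdsLT hb] with x hx
    have hxa : x - a < 0 := sub_neg.2 hx.2
    have := h x hx
    simp only [eval_mul, eval_pow, eval_sub, eval_X, eval_C] at this ⊢
    nlinarith
  linarith [ge_of_tendsto hlim hge]

lemma largest_root_mem_Ioo {k : ℕ} {P : ℝ[X]} (hP : P * Dp (k + 2) = Qp (k + 2)) {a : ℝ}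
    (hroot : P.eval a = 0) (hmax : ∀ x : ℝ, P.eval x = 0 → x ≤ a) : 26 / 5 < a ∧ a < 6 := by
  have heval (x : ℝ) : P.eval x * (Dp (k + 2)).eval x = q (k + 2) x := by
    rw [← eval_mul, hP, eval_Qp]
  obtain ⟨c, hc, hqc⟩ : ∃ c ∈ Set.Ioo (26 / 5 : ℝ) 6, q (k + 2) c = 0 := by
    have hcont : ContinuousOn (q (k + 2)) (Set.Icc (26 / 5) 6) := by
      simpa only [funext (eval_Qp (k + 2))] using (Qp (k + 2)).continuous.continuousOn
    exact intermediate_value_Ioo' (by norm_num) hcont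
      ⟨q_neg_of_six_le k le_rfl, q_pos_at_twentysix_fifths k⟩
  have hPc : P.eval c = 0 := by
    have := heval c
    rw [hqc] at this
    exact (mul_eq_zero.mp this).resolve_right (eval_Dp_ne_zero_of_five_lt _ (by linarith [hc.1]))
  refine ⟨hc.1.trans_le (hmax c hPc), lt_of_not_ge fun h6 => ?_⟩
  have := heval a
  rw [hroot, zero_mul] at this
  exact (q_neg_of_six_le k h6).ne this.symm

theorem statement_16 (m : ℕ) (hm : 2 ≤ m) (P P' : ℝ[X])
    (hP : P * Dp m = Qp m) (hP' : P' * Dp (m + 1) = Qp (m + 1))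
    (lamstar : ℝ) (hroot : P.eval lamstar = 0)
    (hmax : ∀ x : ℝ, P.eval x = 0 → x ≤ lamstar) :
    (5 < lamstar ∧ lamstar < 6) ∧
    ∀ μ : ℝ, P'.eval μ = 0 → phim lamstar < μ → μ < phip lamstar → 2 < μ := by
  obtain ⟨k, rfl⟩ : ∃ k, m = k + 2 := ⟨m - 2, by omega⟩
  obtain ⟨hlo, hhi⟩ := largest_root_mem_Ioo hP hroot hmax
  refine ⟨⟨by linarith, hhi⟩, fun μ hμ hφm hφp => lt_of_not_ge fun hμ2 => ?_⟩
  have hfμ : 26 / 5 < f μ := hlo.trans (lt_f_of_phim_lt_of_lt_phip (by linarith) hφm hφp)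
  have hqμ : q (k + 3) μ = 0 := by rw [← eval_Qp, ← hP', eval_mul, hμ, zero_mul]
  obtain rfl : μ = 2 := le_antisymm hμ2 (by linarith [q_le_sub_two k hμ2 hfμ])
  have hdvd : (X - C 2) ^ 2 ∣ Qp (k + 3) := by
    rw [← hP', sq]
    exact mul_dvd_mul (dvd_iff_isRoot.mpr hμ) (X_sub_C_two_dvd_Dp (by omega))
  refine not_sq_dvd_of_eval_le_sub (by norm_num : (3 / 2 : ℝ) < 2) (fun x hx => ?_) hdvd
  rw [eval_Qp]
  exact q_le_sub_two k hx.2.le (by unfold f; nlinarith [hx.1, hx.2])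
end
end
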